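/- arXiv:1604.02860 — 2 statements merged into one kernel-verified Lean document; each statement's English description precedes it below -/
import Mathlib

section
/- Let (Φ_ε)_{ε∈(0,1]} be a test object for (𝓢',𝓢). Then the net (𝓕⁻¹ ∘ Φ_ε ∘ 𝓕')_{ε∈(0,1]} is again a test object for (𝓢',𝓢). Likewise, if (Ψ_ε) is a 0-test object, then (𝓕⁻¹ ∘ Ψ_ε ∘ 𝓕') is a 0-test object. Moreover, Φ ↦ 𝓕⁻¹ ∘ Φ ∘ 𝓕' is a bijection of the set of test objects onto itself and of the set of 0-test objects onto itself. -/
open MeasureTheory SchwartzMap Filter Topology Bornology Complex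

noncomputable section

/-- The Schwartz space `𝓢(ℝⁿ, ℂ)`. -/
abbrev Sch (n : ℕ) := SchwartzMap (EuclideanSpace ℝ (Fin n)) ℂ

/-- The space `𝓢'` of tempered distributions, i.e. the continuous linear functionals on `𝓢`,
endowed (by Mathlib's default instance) with the strong topology of uniform convergence on
bounded subsets of `𝓢`. -/
abbrev SchDual (n : ℕ) := Sch n →L[ℂ] ℂ

/-- The canonical embedding `j : 𝓢 → 𝓢'`, `j(f)(g) = ∫ f(x) g(x) dx`. -/
def jEmb {n : ℕ} (f : Sch n) : SchDual n := by
  refine SchwartzMap.mkCLMtoNormedSpace (fun g : Sch n => ∫ x, f x * g x) ?_ ?_ ?_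
  · intro g h
    have hg : Integrable (fun x => f x * g x) volume :=
      g.integrable.bdd_mul f.continuous.aestronglyMeasurable
        (Eventually.of_forall fun x => f.norm_le_seminorm ℂ x)
    have hh : Integrable (fun x => f x * h x) volume :=
      h.integrable.bdd_mul f.continuous.aestronglyMeasurable
        (Eventually.of_forall fun x => f.norm_le_seminorm ℂ x)
    simp only [SchwartzMap.add_apply, mul_add]
    exact integral_add hg hh
  · intro a g
    simp only [SchwartzMap.smul_apply, smul_eq_mul, RingHom.id_apply]
    rw [← integral_const_mul]
    congr 1; funext x; ring
  · refine ⟨{(0, 0)}, ∫ x, ‖f x‖, integral_nonneg (fun x => norm_nonneg _), fun g => ?_⟩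
    refine (norm_integral_le_integral_norm _).trans ?_
    have : ∀ x, ‖f x * g x‖ ≤ ‖f x‖ * (SchwartzMap.seminorm ℂ 0 0) g := by
      intro x
      rw [norm_mul]
      exact mul_le_mul_of_nonneg_left (g.norm_le_seminorm ℂ x) (norm_nonneg _)
    refine (integral_mono_of_nonneg (Eventually.of_forall fun x => norm_nonneg _)
      (f.integrable.norm.mul_const _) (Eventually.of_forall this)).trans ?_
    rw [integral_mul_const]
    simp [schwartzSeminormFamily]

/-- The filter describing `ε → 0` with `ε ∈ (0,1]`. -/
def zeroFilter : Filter ℝ := nhdsWithin 0 (Set.Ioc 0 1)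

/-- A *test object* for `(𝓢', 𝓢)`: a net `(Φ_ε)` of continuous linear maps `𝓢' → 𝓢` such that
(ii) `j ∘ Φ_ε → id` in `L_b(𝓢',𝓢')`, (iii) `sup_{f ∈ B} q(Φ_ε (j f) - f) = O(ε^m)` for every
`m ∈ ℕ`, every bounded `B ⊆ 𝓢` and every seminorm `q` of `𝓢`, and (iv) for every bounded
`B' ⊆ 𝓢'` and every seminorm `q` of `𝓢` there is `N` with `sup_{u ∈ B'} q(Φ_ε u) = O(ε^{-N})`.
(The strong topology of `L_b(𝓢',𝓢')`, resp. its seminorms, are spelled out via uniform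
convergence on bounded sets, the seminorms of `𝓢'` being suprema over bounded subsets of `𝓢`.) -/
structure IsTestObject {n : ℕ} (Φ : ℝ → (SchDual n →L[ℂ] Sch n)) : Prop where
  tendsto_id : ∀ B' : Set (SchDual n), IsVonNBounded ℂ B' →
    ∀ B : Set (Sch n), IsVonNBounded ℂ B → ∀ δ > (0:ℝ), ∀ᶠ ε in zeroFilter,
      ∀ u ∈ B', ∀ g ∈ B, ‖jEmb (Φ ε u) g - u g‖ < δ
  negligible_on_Sch : ∀ m : ℕ, ∀ B : Set (Sch n), IsVonNBounded ℂ B → ∀ k l : ℕ,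
    ∃ C : ℝ, ∀ᶠ ε in zeroFilter, ∀ f ∈ B,
      SchwartzMap.seminorm ℂ k l (Φ ε (jEmb f) - f) ≤ C * ε ^ m
  moderate : ∀ B' : Set (SchDual n), IsVonNBounded ℂ B' → ∀ k l : ℕ,
    ∃ N : ℕ, ∃ C : ℝ, ∀ᶠ ε in zeroFilter, ∀ u ∈ B',
      SchwartzMap.seminorm ℂ k l (Φ ε u) ≤ C / ε ^ N

/-- A *0-test object* for `(𝓢', 𝓢)`: as `IsTestObject`, but with `j ∘ Φ_ε → 0` in
`L_b(𝓢',𝓢')` in (ii') and `sup_{f ∈ B} q(Φ_ε (j f)) = O(ε^m)` in (iii'). -/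
structure IsZeroTestObject {n : ℕ} (Φ : ℝ → (SchDual n →L[ℂ] Sch n)) : Prop where
  tendsto_zero : ∀ B' : Set (SchDual n), IsVonNBounded ℂ B' →
    ∀ B : Set (Sch n), IsVonNBounded ℂ B → ∀ δ > (0:ℝ), ∀ᶠ ε in zeroFilter,
      ∀ u ∈ B', ∀ g ∈ B, ‖jEmb (Φ ε u) g‖ < δ
  negligible_on_Sch : ∀ m : ℕ, ∀ B : Set (Sch n), IsVonNBounded ℂ B → ∀ k l : ℕ,
    ∃ C : ℝ, ∀ᶠ ε in zeroFilter, ∀ f ∈ B,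
      SchwartzMap.seminorm ℂ k l (Φ ε (jEmb f)) ≤ C * ε ^ m
  moderate : ∀ B' : Set (SchDual n), IsVonNBounded ℂ B' → ∀ k l : ℕ,
    ∃ N : ℕ, ∃ C : ℝ, ∀ᶠ ε in zeroFilter, ∀ u ∈ B',
      SchwartzMap.seminorm ℂ k l (Φ ε u) ≤ C / ε ^ N

/-- The Fourier transform `𝓕 : 𝓢 → 𝓢` (with kernel `e^{-2πi⟨x,ξ⟩}`) as a linear topological
isomorphism of the Schwartz space. -/
def fourierCLE (n : ℕ) : Sch n ≃L[ℂ] Sch n := FourierTransform.fourierCLE ℂ (Sch n)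

/-- The Fourier transform on tempered distributions, `𝓕'(u) = u ∘ 𝓕`. -/
def fourierDual {n : ℕ} (u : SchDual n) : SchDual n :=
  u.comp (fourierCLE n).toContinuousLinearMap

/-- `𝓕'` as a continuous linear map `𝓢' →L 𝓢'`. -/
def fourierDualCLM (n : ℕ) : SchDual n →L[ℂ] SchDual n :=
  ContinuousLinearMap.precomp ℂ (fourierCLE n).toContinuousLinearMap

/-- `(𝓕')⁻¹`, i.e. `u ↦ u ∘ 𝓕⁻¹`, as a continuous linear map `𝓢' →L 𝓢'`. -/
def fourierDualInvCLM (n : ℕ) : SchDual n →L[ℂ] SchDual n :=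
  ContinuousLinearMap.precomp ℂ (fourierCLE n).symm.toContinuousLinearMap

/-- The conjugation `Φ ↦ 𝓕⁻¹ ∘ Φ ∘ 𝓕'` of a smoothing operator. -/
def ftConj {n : ℕ} (Φ : SchDual n →L[ℂ] Sch n) : SchDual n →L[ℂ] Sch n :=
  ((fourierCLE n).symm.toContinuousLinearMap).comp (Φ.comp (fourierDualCLM n))

/-- The conjugation `Φ ↦ 𝓕 ∘ Φ ∘ (𝓕')⁻¹` of a smoothing operator. -/
def ftConjInv {n : ℕ} (Φ : SchDual n →L[ℂ] Sch n) : SchDual n →L[ℂ] Sch n :=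
  ((fourierCLE n).toContinuousLinearMap).comp (Φ.comp (fourierDualInvCLM n))

/-- The Fourier transform on the basic space: `(𝓕R)(Φ) = 𝓕(R(𝓕⁻¹ ∘ Φ ∘ 𝓕'))`. -/
def FTbasic {n : ℕ} (R : (SchDual n →L[ℂ] Sch n) → Sch n) :
    (SchDual n →L[ℂ] Sch n) → Sch n :=
  fun Φ => fourierCLE n (R (ftConj Φ))

/-- The candidate inverse Fourier transform on the basic space,
`R ↦ (Φ ↦ 𝓕⁻¹(R(𝓕 ∘ Φ ∘ (𝓕')⁻¹)))`. -/
def FTbasicInv {n : ℕ} (R : (SchDual n →L[ℂ] Sch n) → Sch n) :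
    (SchDual n →L[ℂ] Sch n) → Sch n :=
  fun Φ => (fourierCLE n).symm (R (ftConjInv Φ))

section Aux

variable {n : ℕ}

lemma jEmb_apply (f g : Sch n) : jEmb f g = ∫ x, f x * g x := rfl

/-- The multiplication formula: the Fourier transform is self-adjoint for `jEmb`. -/
lemma jEmb_fourier (f g : Sch n) :
    jEmb (fourierCLE n f) g = jEmb f (fourierCLE n g) := by
  exact SchwartzMap.integral_fourier_mul_eq f g

/-- Seminorm bound for a continuous linear map of Schwartz space. -/
lemma clm_bound (F : Sch n →L[ℂ] Sch n) (k l : ℕ) :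
    ∃ (s : Finset (ℕ × ℕ)) (C : ℝ), 0 ≤ C ∧ ∀ f : Sch n,
      SchwartzMap.seminorm ℂ k l (F f) ≤ C * ∑ i ∈ s, SchwartzMap.seminorm ℂ i.1 i.2 f := by
  have hws := schwartz_withSeminorms ℂ (EuclideanSpace ℝ (Fin n)) ℂ
  have hq : Continuous fun f : Sch n =>
      schwartzSeminormFamily ℂ (EuclideanSpace ℝ (Fin n)) ℂ (k, l) (F f) :=
    (hws.continuous_seminorm (k, l)).comp F.continuous
  obtain ⟨s, C, -, hC⟩ := Seminorm.bound_of_continuous hws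
    ((schwartzSeminormFamily ℂ (EuclideanSpace ℝ (Fin n)) ℂ (k, l)).comp
      (F : Sch n →ₗ[ℂ] Sch n)) hq
  refine ⟨s, C, C.coe_nonneg, fun f => ?_⟩
  have h2 := hC f
  simp only [Seminorm.comp_apply, Seminorm.smul_apply, NNReal.smul_def, smul_eq_mul,
    ContinuousLinearMap.coe_coe] at h2
  have h3 : (s.sup (schwartzSeminormFamily ℂ (EuclideanSpace ℝ (Fin n)) ℂ)) f
      ≤ ∑ i ∈ s, SchwartzMap.seminorm ℂ i.1 i.2 f := by
    refine Seminorm.finset_sup_apply_le (Finset.sum_nonneg fun i _ => apply_nonneg _ f) ?_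
    intro i hi
    exact Finset.single_le_sum (f := fun j : ℕ × ℕ => SchwartzMap.seminorm ℂ j.1 j.2 f)
      (fun j _ => apply_nonneg _ f) hi
  calc SchwartzMap.seminorm ℂ k l (F f)
      = schwartzSeminormFamily ℂ (EuclideanSpace ℝ (Fin n)) ℂ (k, l) (F f) := rfl
    _ ≤ ↑C * (s.sup (schwartzSeminormFamily ℂ (EuclideanSpace ℝ (Fin n)) ℂ)) f := h2
    _ ≤ ↑C * ∑ i ∈ s, SchwartzMap.seminorm ℂ i.1 i.2 f :=
        mul_le_mul_of_nonneg_left h3 C.coe_nonneg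

/-- Generic conjugation of a smoothing operator by a continuous linear equivalence. -/
def conjE (E : Sch n ≃L[ℂ] Sch n) (Φ : SchDual n →L[ℂ] Sch n) : SchDual n →L[ℂ] Sch n :=
  (E.symm.toContinuousLinearMap).comp
    (Φ.comp (ContinuousLinearMap.precomp ℂ
      (E.toContinuousLinearMap : Sch n →L[ℂ] Sch n)))

lemma conjE_apply (E : Sch n ≃L[ℂ] Sch n) (Φ : SchDual n →L[ℂ] Sch n) (u : SchDual n) :
    conjE E Φ u = E.symm (Φ (u.comp E.toContinuousLinearMap)) := rfl

lemma jEmb_symm (E : Sch n ≃L[ℂ] Sch n)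
    (hE : ∀ f g : Sch n, jEmb (E f) g = jEmb f (E g)) (f g : Sch n) :
    jEmb (E.symm f) g = jEmb f (E.symm g) := by
  have h := hE (E.symm f) (E.symm g)
  rw [E.apply_symm_apply, E.apply_symm_apply] at h
  exact h.symm

lemma comp_jEmb (E : Sch n ≃L[ℂ] Sch n)
    (hE : ∀ f g : Sch n, jEmb (E f) g = jEmb f (E g)) (f : Sch n) :
    (jEmb f).comp E.toContinuousLinearMap = jEmb (E f) := by
  ext g
  exact (hE f g).symm

lemma eventually_Ioc : ∀ᶠ ε in zeroFilter, ε ∈ Set.Ioc (0:ℝ) 1 :=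
  eventually_mem_nhdsWithin

/-- The `moderate` property is preserved by conjugation. -/
lemma moderate_conjE (E : Sch n ≃L[ℂ] Sch n) {Φ : ℝ → (SchDual n →L[ℂ] Sch n)}
    (hΦ : ∀ B' : Set (SchDual n), IsVonNBounded ℂ B' → ∀ k l : ℕ,
      ∃ N : ℕ, ∃ C : ℝ, ∀ᶠ ε in zeroFilter, ∀ u ∈ B',
        SchwartzMap.seminorm ℂ k l (Φ ε u) ≤ C / ε ^ N) :
    ∀ B' : Set (SchDual n), IsVonNBounded ℂ B' → ∀ k l : ℕ,
      ∃ N : ℕ, ∃ C : ℝ, ∀ᶠ ε in zeroFilter, ∀ u ∈ B',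
        SchwartzMap.seminorm ℂ k l (conjE E (Φ ε) u) ≤ C / ε ^ N := by
  intro B' hB' k l
  obtain ⟨s, C, hC0, hCb⟩ := clm_bound (E.symm.toContinuousLinearMap) k l
  have hB'2 : IsVonNBounded ℂ
      ((ContinuousLinearMap.precomp ℂ (E.toContinuousLinearMap : Sch n →L[ℂ] Sch n)) '' B') :=
    hB'.image _
  have H : ∀ i : ℕ × ℕ, ∃ N : ℕ, ∃ Ci : ℝ, ∀ᶠ ε in zeroFilter,
      ∀ u ∈ (ContinuousLinearMap.precomp ℂ
        (E.toContinuousLinearMap : Sch n →L[ℂ] Sch n)) '' B',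
      SchwartzMap.seminorm ℂ i.1 i.2 (Φ ε u) ≤ Ci / ε ^ N :=
    fun i => hΦ _ hB'2 i.1 i.2
  choose N D hD using H
  refine ⟨s.sup N, C * ∑ i ∈ s, max (D i) 0, ?_⟩
  filter_upwards [(Filter.eventually_all_finset s).mpr fun i _ => hD i, eventually_Ioc]
    with ε hε hε2 u hu
  obtain ⟨hε0, hε1⟩ := hε2
  have key : conjE E (Φ ε) u
      = E.symm.toContinuousLinearMap (Φ ε (u.comp E.toContinuousLinearMap)) := rfl
  rw [key]
  refine (hCb _).trans ?_
  have hstep : ∀ i ∈ s,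
      SchwartzMap.seminorm ℂ i.1 i.2 (Φ ε (u.comp E.toContinuousLinearMap))
        ≤ max (D i) 0 / ε ^ (s.sup N) := by
    intro i hi
    have h1 := hε i hi _ ⟨u, hu, rfl⟩
    refine h1.trans (div_le_div₀ (le_max_right _ _) (le_max_left _ _) (pow_pos hε0 _) ?_)
    exact pow_le_pow_of_le_one hε0.le hε1 (Finset.le_sup hi)
  calc C * ∑ i ∈ s, SchwartzMap.seminorm ℂ i.1 i.2 (Φ ε (u.comp E.toContinuousLinearMap))
      ≤ C * ∑ i ∈ s, (max (D i) 0 / ε ^ (s.sup N)) :=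
        mul_le_mul_of_nonneg_left (Finset.sum_le_sum hstep) hC0
    _ = (C * ∑ i ∈ s, max (D i) 0) / ε ^ (s.sup N) := by
        rw [← Finset.sum_div]; ring

/-- Conjugation preserves test objects. -/
lemma isTestObject_conjE (E : Sch n ≃L[ℂ] Sch n)
    (hE : ∀ f g : Sch n, jEmb (E f) g = jEmb f (E g))
    {Φ : ℝ → (SchDual n →L[ℂ] Sch n)} (hΦ : IsTestObject Φ) :
    IsTestObject fun ε => conjE E (Φ ε) := by
  constructor
  · intro B' hB' B hB δ hδ
    have hB'2 : IsVonNBounded ℂ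
        ((ContinuousLinearMap.precomp ℂ (E.toContinuousLinearMap : Sch n →L[ℂ] Sch n)) '' B') :=
      hB'.image _
    have hB2 : IsVonNBounded ℂ
        ((E.symm.toContinuousLinearMap : Sch n →L[ℂ] Sch n) '' B) := hB.image _
    filter_upwards [hΦ.tendsto_id _ hB'2 _ hB2 δ hδ] with ε hε u hu g hg
    have h1 := hε _ ⟨u, hu, rfl⟩ _ ⟨g, hg, rfl⟩
    have e1 : jEmb (conjE E (Φ ε) u) g
        = jEmb (Φ ε (u.comp E.toContinuousLinearMap)) (E.symm g) := by
      rw [conjE_apply, jEmb_symm E hE]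
    have e2 : (u.comp E.toContinuousLinearMap) (E.symm g) = u g := by
      simp
    rw [e1, ← e2]
    simpa using h1
  · intro m B hB k l
    obtain ⟨s, C, hC0, hCb⟩ := clm_bound (E.symm.toContinuousLinearMap) k l
    have hBE : IsVonNBounded ℂ
        ((E.toContinuousLinearMap : Sch n →L[ℂ] Sch n) '' B) := hB.image _
    have H : ∀ i : ℕ × ℕ, ∃ Ci : ℝ, ∀ᶠ ε in zeroFilter,
        ∀ f ∈ (E.toContinuousLinearMap : Sch n →L[ℂ] Sch n) '' B,
        SchwartzMap.seminorm ℂ i.1 i.2 (Φ ε (jEmb f) - f) ≤ Ci * ε ^ m :=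
      fun i => hΦ.negligible_on_Sch m _ hBE i.1 i.2
    choose D hD using H
    refine ⟨C * ∑ i ∈ s, D i, ?_⟩
    filter_upwards [(Filter.eventually_all_finset s).mpr fun i _ => hD i] with ε hε f hf
    have key : conjE E (Φ ε) (jEmb f) - f
        = E.symm.toContinuousLinearMap (Φ ε (jEmb (E f)) - E f) := by
      rw [map_sub, conjE_apply, comp_jEmb E hE]
      simp
    rw [key]
    refine (hCb _).trans ?_
    have hsum : ∑ i ∈ s, SchwartzMap.seminorm ℂ i.1 i.2 (Φ ε (jEmb (E f)) - E f)
        ≤ ∑ i ∈ s, D i * ε ^ m :=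
      Finset.sum_le_sum fun i hi => hε i hi (E f) ⟨f, hf, rfl⟩
    calc C * ∑ i ∈ s, SchwartzMap.seminorm ℂ i.1 i.2 (Φ ε (jEmb (E f)) - E f)
        ≤ C * ∑ i ∈ s, D i * ε ^ m := mul_le_mul_of_nonneg_left hsum hC0
      _ = (C * ∑ i ∈ s, D i) * ε ^ m := by rw [← Finset.sum_mul]; ring
  · exact moderate_conjE E hΦ.moderate

/-- Conjugation preserves 0-test objects. -/
lemma isZeroTestObject_conjE (E : Sch n ≃L[ℂ] Sch n)
    (hE : ∀ f g : Sch n, jEmb (E f) g = jEmb f (E g))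
    {Φ : ℝ → (SchDual n →L[ℂ] Sch n)} (hΦ : IsZeroTestObject Φ) :
    IsZeroTestObject fun ε => conjE E (Φ ε) := by
  constructor
  · intro B' hB' B hB δ hδ
    have hB'2 : IsVonNBounded ℂ
        ((ContinuousLinearMap.precomp ℂ (E.toContinuousLinearMap : Sch n →L[ℂ] Sch n)) '' B') :=
      hB'.image _
    have hB2 : IsVonNBounded ℂ
        ((E.symm.toContinuousLinearMap : Sch n →L[ℂ] Sch n) '' B) := hB.image _
    filter_upwards [hΦ.tendsto_zero _ hB'2 _ hB2 δ hδ] with ε hε u hu g hg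
    have h1 := hε _ ⟨u, hu, rfl⟩ _ ⟨g, hg, rfl⟩
    have e1 : jEmb (conjE E (Φ ε) u) g
        = jEmb (Φ ε (u.comp E.toContinuousLinearMap)) (E.symm g) := by
      rw [conjE_apply, jEmb_symm E hE]
    rw [e1]
    simpa using h1
  · intro m B hB k l
    obtain ⟨s, C, hC0, hCb⟩ := clm_bound (E.symm.toContinuousLinearMap) k l
    have hBE : IsVonNBounded ℂ
        ((E.toContinuousLinearMap : Sch n →L[ℂ] Sch n) '' B) := hB.image _
    have H : ∀ i : ℕ × ℕ, ∃ Ci : ℝ, ∀ᶠ ε in zeroFilter,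
        ∀ f ∈ (E.toContinuousLinearMap : Sch n →L[ℂ] Sch n) '' B,
        SchwartzMap.seminorm ℂ i.1 i.2 (Φ ε (jEmb f)) ≤ Ci * ε ^ m :=
      fun i => hΦ.negligible_on_Sch m _ hBE i.1 i.2
    choose D hD using H
    refine ⟨C * ∑ i ∈ s, D i, ?_⟩
    filter_upwards [(Filter.eventually_all_finset s).mpr fun i _ => hD i] with ε hε f hf
    have key : conjE E (Φ ε) (jEmb f)
        = E.symm.toContinuousLinearMap (Φ ε (jEmb (E f))) := by
      rw [conjE_apply, comp_jEmb E hE]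
      rfl
    rw [key]
    refine (hCb _).trans ?_
    have hsum : ∑ i ∈ s, SchwartzMap.seminorm ℂ i.1 i.2 (Φ ε (jEmb (E f)))
        ≤ ∑ i ∈ s, D i * ε ^ m :=
      Finset.sum_le_sum fun i hi => hε i hi (E f) ⟨f, hf, rfl⟩
    calc C * ∑ i ∈ s, SchwartzMap.seminorm ℂ i.1 i.2 (Φ ε (jEmb (E f)))
        ≤ C * ∑ i ∈ s, D i * ε ^ m := mul_le_mul_of_nonneg_left hsum hC0
      _ = (C * ∑ i ∈ s, D i) * ε ^ m := by rw [← Finset.sum_mul]; ring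
  · exact moderate_conjE E hΦ.moderate

lemma conjE_conjE (E : Sch n ≃L[ℂ] Sch n) (Φ : SchDual n →L[ℂ] Sch n) :
    conjE E.symm (conjE E Φ) = Φ := by
  ext u : 1
  rw [conjE_apply, conjE_apply, ContinuousLinearEquiv.symm_symm,
    ContinuousLinearEquiv.apply_symm_apply]
  congr 1
  ext g
  simp

lemma conjE_conjE' (E : Sch n ≃L[ℂ] Sch n) (Φ : SchDual n →L[ℂ] Sch n) :
    conjE E (conjE E.symm Φ) = Φ := by
  have h := conjE_conjE E.symm Φ
  rwa [ContinuousLinearEquiv.symm_symm] at h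

lemma ftConj_eq (Φ : SchDual n →L[ℂ] Sch n) : ftConj Φ = conjE (fourierCLE n) Φ := rfl

end Aux

/-- If `(Φ_ε)` is a test object for `(𝓢',𝓢)` then so is `(𝓕⁻¹ ∘ Φ_ε ∘ 𝓕')`; likewise for
0-test objects; and `Φ ↦ 𝓕⁻¹ ∘ Φ ∘ 𝓕'` is a bijection of the set of test objects onto itself
and of the set of 0-test objects onto itself. -/
theorem fourier_conj_of_test_objects (n : ℕ) (hn : 0 < n) :
    (∀ Φ : ℝ → (SchDual n →L[ℂ] Sch n), IsTestObject Φ →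
      IsTestObject (fun ε => ftConj (Φ ε))) ∧
    (∀ Ψ : ℝ → (SchDual n →L[ℂ] Sch n), IsZeroTestObject Ψ →
      IsZeroTestObject (fun ε => ftConj (Ψ ε))) ∧
    Set.BijOn (fun (Φ : ℝ → (SchDual n →L[ℂ] Sch n)) => fun ε => ftConj (Φ ε))
      {Φ | IsTestObject Φ} {Φ | IsTestObject Φ} ∧
    Set.BijOn (fun (Ψ : ℝ → (SchDual n →L[ℂ] Sch n)) => fun ε => ftConj (Ψ ε))
      {Ψ | IsZeroTestObject Ψ} {Ψ | IsZeroTestObject Ψ} := by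
  have hE : ∀ f g : Sch n, jEmb (fourierCLE n f) g = jEmb f (fourierCLE n g) := jEmb_fourier
  have hE' : ∀ f g : Sch n,
      jEmb ((fourierCLE n).symm f) g = jEmb f ((fourierCLE n).symm g) :=
    jEmb_symm (fourierCLE n) hE
  have hT : ∀ Φ : ℝ → (SchDual n →L[ℂ] Sch n), IsTestObject Φ →
      IsTestObject (fun ε => ftConj (Φ ε)) := by
    intro Φ hΦ
    have := isTestObject_conjE (fourierCLE n) hE hΦ
    simpa only [← ftConj_eq] using this
  have hZ : ∀ Ψ : ℝ → (SchDual n →L[ℂ] Sch n), IsZeroTestObject Ψ →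
      IsZeroTestObject (fun ε => ftConj (Ψ ε)) := by
    intro Ψ hΨ
    have := isZeroTestObject_conjE (fourierCLE n) hE hΨ
    simpa only [← ftConj_eq] using this
  have hinj : ∀ Φ Ψ : ℝ → (SchDual n →L[ℂ] Sch n),
      (fun ε => ftConj (Φ ε)) = (fun ε => ftConj (Ψ ε)) → Φ = Ψ := by
    intro Φ Ψ h
    funext ε
    have h2 : ftConj (Φ ε) = ftConj (Ψ ε) := congrFun h ε
    rw [ftConj_eq, ftConj_eq] at h2
    have h3 := congrArg (conjE (fourierCLE n).symm) h2
    rwa [conjE_conjE, conjE_conjE] at h3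
  refine ⟨hT, hZ, ⟨fun Φ hΦ => hT Φ hΦ, fun Φ hΦ Ψ hΨ h => hinj Φ Ψ h, ?_⟩,
    ⟨fun Ψ hΨ => hZ Ψ hΨ, fun Φ hΦ Ψ hΨ h => hinj Φ Ψ h, ?_⟩⟩
  · intro Ψ hΨ
    refine ⟨fun ε => conjE (fourierCLE n).symm (Ψ ε),
      isTestObject_conjE (fourierCLE n).symm hE' hΨ, ?_⟩
    funext ε
    show ftConj (conjE (fourierCLE n).symm (Ψ ε)) = Ψ ε
    rw [ftConj_eq, conjE_conjE']
  · intro Ψ hΨ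
    refine ⟨fun ε => conjE (fourierCLE n).symm (Ψ ε),
      isZeroTestObject_conjE (fourierCLE n).symm hE' hΨ, ?_⟩
    funext ε
    show ftConj (conjE (fourierCLE n).symm (Ψ ε)) = Ψ ε
    rw [ftConj_eq, conjE_conjE']

end
end

section
/- For every multi-index α ∈ ℕ₀ⁿ and every map R : L(𝓢',𝓢) → 𝓢 the following exchange formulas hold strictly (as equalities of maps L(𝓢',𝓢) → 𝓢): D^α(𝓕R) = 𝓕((−2πiM)^α R) and (2πiM)^α (𝓕R) = 𝓕(D^α R), where D^α acts componentwise by (D^α R)(Φ) = ∂^α(R(Φ)) and M^α acts componentwise by ((M^α)R)(Φ)(x) = x^α · R(Φ)(x). -/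
open MeasureTheory SchwartzMap Filter Topology Bornology Complex

noncomputable section

/-- The operator of multiplication by the `i`-th coordinate function, `f ↦ (x ↦ xᵢ · f x)`,
on Schwartz space. -/
def coordMulCLM {n : ℕ} (i : Fin n) : Sch n →L[ℝ] Sch n :=
  SchwartzMap.bilinLeftCLM (ContinuousLinearMap.mul ℝ ℂ)
    ((Complex.ofRealCLM.comp
      (EuclideanSpace.proj i : EuclideanSpace ℝ (Fin n) →L[ℝ] ℝ)).hasTemperateGrowth)

/-- The multi-index derivative `D^α = ∂₁^{α₁} ⋯ ∂ₙ^{αₙ}` on Schwartz space (powers and the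
product being taken in the composition monoid of continuous linear endomorphisms). -/
def Dmulti {n : ℕ} (α : Fin n → ℕ) : Sch n →L[ℝ] Sch n :=
  (List.ofFn fun i : Fin n =>
    (LineDeriv.lineDerivOpCLM ℝ (Sch n) (EuclideanSpace.single i (1:ℝ)) : Sch n →L[ℝ] Sch n) ^ (α i)).prod

/-- The operator of multiplication by `x^α = x₁^{α₁} ⋯ xₙ^{αₙ}` on Schwartz space. -/
def Mmulti {n : ℕ} (α : Fin n → ℕ) : Sch n →L[ℝ] Sch n :=
  (List.ofFn fun i : Fin n => (coordMulCLM i : Sch n →L[ℝ] Sch n) ^ (α i)).prod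

section ExchangeAux
open Real
open scoped FourierTransform

variable {n : ℕ}

lemma coordMulCLM_apply (i : Fin n) (f : Sch n) (x : EuclideanSpace ℝ (Fin n)) :
    coordMulCLM i f x = f x * (x i : ℂ) := rfl

lemma fourierCLE_coe (f : Sch n) : ⇑(fourierCLE n f) = 𝓕 ⇑f :=
  SchwartzMap.fourier_coe f

lemma fourier_const_smul (c : ℂ) (g : EuclideanSpace ℝ (Fin n) → ℂ) :
    𝓕 (c • g) = c • 𝓕 g :=
  VectorFourier.fourierIntegral_const_smul 𝐞 volume (innerₗ (EuclideanSpace ℝ (Fin n))) g c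

lemma key1 (i : Fin n) (f : Sch n) :
    LineDeriv.lineDerivOpCLM ℝ (Sch n) (EuclideanSpace.single i (1:ℝ)) (fourierCLE n f)
      = (-(2 * (Real.pi:ℂ) * Complex.I)) • fourierCLE n (coordMulCLM i f) := by
  ext x
  have hf : Integrable (⇑f) volume := f.integrable
  have hvf : Integrable (fun v => ‖v‖ * ‖f v‖) volume := by
    simpa using f.integrable_pow_mul volume 1
  have hint : Integrable (VectorFourier.fourierSMulRight (innerSL ℝ) ⇑f) volume := by
    refine (hvf.const_mul (2 * π)).mono'
      (f.continuous.aestronglyMeasurable.fourierSMulRight) ?_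
    filter_upwards with v
    refine le_of_eq ?_
    rw [VectorFourier.norm_fourierSMulRight, innerSL_apply_norm]
    ring
  have step : ∀ y, LineDeriv.lineDerivOpCLM ℝ (Sch n) (EuclideanSpace.single i (1:ℝ)) (fourierCLE n f) y
      = (-(2 * (Real.pi:ℂ) * Complex.I)) • (𝓕 ⇑(coordMulCLM i f)) y := by
    intro y
    rw [LineDeriv.lineDerivOpCLM_apply, SchwartzMap.lineDerivOp_apply_eq_fderiv, fourierCLE_coe,
      Real.fderiv_fourier hf hvf, Real.fourier_continuousLinearMap_apply hint]
    have hinner : ∀ v : EuclideanSpace ℝ (Fin n),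
        (innerSL ℝ v) (EuclideanSpace.single i (1:ℝ)) = v i := by
      intro v
      rw [innerSL_apply_apply, EuclideanSpace.inner_single_right]
      simp
    have : (fun v => VectorFourier.fourierSMulRight (innerSL ℝ) (⇑f) v
        (EuclideanSpace.single i (1:ℝ)))
        = (-(2 * (Real.pi:ℂ) * Complex.I)) • ⇑(coordMulCLM i f) := by
      funext v
      rw [VectorFourier.fourierSMulRight_apply, hinner v]
      show _ = (-(2 * (Real.pi:ℂ) * Complex.I)) • (coordMulCLM i f v)
      rw [coordMulCLM_apply]
      simp only [Complex.real_smul, smul_eq_mul]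
      ring
    rw [this, fourier_const_smul]
    rfl
  rw [step x]
  show _ = (-(2 * (Real.pi:ℂ) * Complex.I)) • (fourierCLE n (coordMulCLM i f)) x
  rw [fourierCLE_coe]

lemma key2 (i : Fin n) (f : Sch n) :
    fourierCLE n (LineDeriv.lineDerivOpCLM ℝ (Sch n) (EuclideanSpace.single i (1:ℝ)) f)
      = (2 * (Real.pi:ℂ) * Complex.I) • coordMulCLM i (fourierCLE n f) := by
  ext x
  have hf : Integrable (⇑f) volume := f.integrable
  have hdf : Integrable (fderiv ℝ ⇑f) volume := by
    have h : ⇑(SchwartzMap.fderivCLM ℝ (EuclideanSpace ℝ (Fin n)) ℂ f) = fderiv ℝ ⇑f :=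
      funext (fderivCLM_apply ℝ f)
    rw [← h]; exact (SchwartzMap.fderivCLM ℝ (EuclideanSpace ℝ (Fin n)) ℂ f).integrable
  have h := Real.fourier_fderiv hf f.differentiable hdf
  have lhs : fourierCLE n (LineDeriv.lineDerivOpCLM ℝ (Sch n) (EuclideanSpace.single i (1:ℝ)) f) x
      = 𝓕 (fderiv ℝ ⇑f) x (EuclideanSpace.single i (1:ℝ)) := by
    rw [fourierCLE_coe, Real.fourier_continuousLinearMap_apply hdf]
    rfl
  have hinner : ((-innerSL ℝ : EuclideanSpace ℝ (Fin n) →L[ℝ] _) x)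
      (EuclideanSpace.single i (1:ℝ)) = -(x i) := by
    rw [ContinuousLinearMap.neg_apply, ContinuousLinearMap.neg_apply, innerSL_apply_apply,
      EuclideanSpace.inner_single_right]
    simp
  rw [lhs, h, VectorFourier.fourierSMulRight_apply, hinner]
  show _ = (2 * (Real.pi:ℂ) * Complex.I) • (coordMulCLM i (fourierCLE n f) x)
  rw [coordMulCLM_apply]
  show _ = (2 * (Real.pi:ℂ) * Complex.I) • ((fourierCLE n f) x * (x i : ℂ))
  rw [fourierCLE_coe]
  simp only [Complex.real_smul, smul_eq_mul, Complex.ofReal_neg]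
  ring

lemma pderiv_csmul (m : EuclideanSpace ℝ (Fin n)) (c : ℂ) (f : Sch n) :
    LineDeriv.lineDerivOpCLM ℝ (Sch n) m (c • f) = c • LineDeriv.lineDerivOpCLM ℝ (Sch n) m f := by
  ext x
  rw [LineDeriv.lineDerivOpCLM_apply, SchwartzMap.smul_apply, LineDeriv.lineDerivOpCLM_apply,
    SchwartzMap.lineDerivOp_apply_eq_fderiv, SchwartzMap.lineDerivOp_apply_eq_fderiv]
  have h : ⇑(c • f) = fun y => c • f y := rfl
  rw [h, fderiv_fun_const_smul f.differentiable.differentiableAt c]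
  rfl

lemma coordMul_csmul (i : Fin n) (c : ℂ) (f : Sch n) :
    coordMulCLM i (c • f) = c • coordMulCLM i f := by
  ext x
  rw [SchwartzMap.smul_apply, coordMulCLM_apply, coordMulCLM_apply, SchwartzMap.smul_apply,
    smul_eq_mul, smul_eq_mul, mul_assoc]

lemma pderiv_pow_csmul (m : EuclideanSpace ℝ (Fin n)) (k : ℕ) (c : ℂ) (f : Sch n) :
    ((LineDeriv.lineDerivOpCLM ℝ (Sch n) m : Sch n →L[ℝ] Sch n) ^ k) (c • f)
      = c • ((LineDeriv.lineDerivOpCLM ℝ (Sch n) m : Sch n →L[ℝ] Sch n) ^ k) f := by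
  induction k generalizing f with
  | zero => simp
  | succ k ih =>
    rw [pow_succ, ContinuousLinearMap.mul_apply, ContinuousLinearMap.mul_apply,
      pderiv_csmul, ih]

lemma coordMul_pow_csmul (i : Fin n) (k : ℕ) (c : ℂ) (f : Sch n) :
    ((coordMulCLM i : Sch n →L[ℝ] Sch n) ^ k) (c • f)
      = c • ((coordMulCLM i : Sch n →L[ℝ] Sch n) ^ k) f := by
  induction k generalizing f with
  | zero => simp
  | succ k ih =>
    rw [pow_succ, ContinuousLinearMap.mul_apply, ContinuousLinearMap.mul_apply,
      coordMul_csmul, ih]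

lemma keyD_pow (i : Fin n) (k : ℕ) (f : Sch n) :
    ((LineDeriv.lineDerivOpCLM ℝ (Sch n) (EuclideanSpace.single i (1:ℝ)) : Sch n →L[ℝ] Sch n) ^ k)
        (fourierCLE n f)
      = (-(2 * (Real.pi:ℂ) * Complex.I)) ^ k •
        fourierCLE n (((coordMulCLM i : Sch n →L[ℝ] Sch n) ^ k) f) := by
  induction k with
  | zero => simp
  | succ k ih =>
    have hD : ((LineDeriv.lineDerivOpCLM ℝ (Sch n) (EuclideanSpace.single i (1:ℝ)) :
        Sch n →L[ℝ] Sch n) ^ (k+1)) (fourierCLE n f)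
        = LineDeriv.lineDerivOpCLM ℝ (Sch n) (EuclideanSpace.single i (1:ℝ))
          (((LineDeriv.lineDerivOpCLM ℝ (Sch n) (EuclideanSpace.single i (1:ℝ)) :
            Sch n →L[ℝ] Sch n) ^ k) (fourierCLE n f)) := by
      rw [pow_succ', ContinuousLinearMap.mul_apply]
    have hM : ((coordMulCLM i : Sch n →L[ℝ] Sch n) ^ (k+1)) f
        = coordMulCLM i (((coordMulCLM i : Sch n →L[ℝ] Sch n) ^ k) f) := by
      rw [pow_succ', ContinuousLinearMap.mul_apply]
    rw [hD, ih, pderiv_csmul, key1, hM, smul_smul]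
    congr 1

lemma keyM_pow (i : Fin n) (k : ℕ) (f : Sch n) :
    fourierCLE n (((LineDeriv.lineDerivOpCLM ℝ (Sch n) (EuclideanSpace.single i (1:ℝ)) :
        Sch n →L[ℝ] Sch n) ^ k) f)
      = (2 * (Real.pi:ℂ) * Complex.I) ^ k •
        ((coordMulCLM i : Sch n →L[ℝ] Sch n) ^ k) (fourierCLE n f) := by
  induction k with
  | zero => simp
  | succ k ih =>
    have hD : ((LineDeriv.lineDerivOpCLM ℝ (Sch n) (EuclideanSpace.single i (1:ℝ)) :
        Sch n →L[ℝ] Sch n) ^ (k+1)) f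
        = LineDeriv.lineDerivOpCLM ℝ (Sch n) (EuclideanSpace.single i (1:ℝ))
          (((LineDeriv.lineDerivOpCLM ℝ (Sch n) (EuclideanSpace.single i (1:ℝ)) :
            Sch n →L[ℝ] Sch n) ^ k) f) := by
      rw [pow_succ', ContinuousLinearMap.mul_apply]
    have hM : ((coordMulCLM i : Sch n →L[ℝ] Sch n) ^ (k+1)) (fourierCLE n f)
        = coordMulCLM i (((coordMulCLM i : Sch n →L[ℝ] Sch n) ^ k) (fourierCLE n f)) := by
      rw [pow_succ', ContinuousLinearMap.mul_apply]
    rw [hD, key2, ih, coordMul_csmul, hM, smul_smul, ← pow_succ']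

lemma exch1_list (l : List (Fin n × ℕ)) (f : Sch n) :
    ((l.map fun p => (LineDeriv.lineDerivOpCLM ℝ (Sch n) (EuclideanSpace.single p.1 (1:ℝ)) :
        Sch n →L[ℝ] Sch n) ^ p.2).prod) (fourierCLE n f)
      = (-(2 * (Real.pi:ℂ) * Complex.I)) ^ ((l.map Prod.snd).sum) •
        fourierCLE n (((l.map fun p => (coordMulCLM p.1 : Sch n →L[ℝ] Sch n) ^ p.2).prod) f) := by
  induction l generalizing f with
  | nil => simp
  | cons p l ih =>
    simp only [List.map_cons, List.prod_cons, List.sum_cons, ContinuousLinearMap.mul_apply]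
    rw [ih f, pderiv_pow_csmul, keyD_pow, smul_smul, ← pow_add, Nat.add_comm]

lemma exch2_list (l : List (Fin n × ℕ)) (f : Sch n) :
    fourierCLE n (((l.map fun p => (LineDeriv.lineDerivOpCLM ℝ (Sch n)
        (EuclideanSpace.single p.1 (1:ℝ)) : Sch n →L[ℝ] Sch n) ^ p.2).prod) f)
      = (2 * (Real.pi:ℂ) * Complex.I) ^ ((l.map Prod.snd).sum) •
        ((l.map fun p => (coordMulCLM p.1 : Sch n →L[ℝ] Sch n) ^ p.2).prod) (fourierCLE n f) := by
  induction l generalizing f with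
  | nil => simp
  | cons p l ih =>
    simp only [List.map_cons, List.prod_cons, List.sum_cons, ContinuousLinearMap.mul_apply]
    rw [keyM_pow, ih f, coordMul_pow_csmul, smul_smul, ← pow_add]

lemma exchange1 (α : Fin n → ℕ) (f : Sch n) :
    Dmulti α (fourierCLE n f)
      = (-(2 * (Real.pi:ℂ) * Complex.I)) ^ (∑ i, α i) • fourierCLE n (Mmulti α f) := by
  have h := exch1_list (List.ofFn fun i => (i, α i)) f
  simp only [List.map_ofFn, Function.comp_def, List.sum_ofFn] at h
  exact h

lemma exchange2 (α : Fin n → ℕ) (f : Sch n) :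
    fourierCLE n (Dmulti α f)
      = (2 * (Real.pi:ℂ) * Complex.I) ^ (∑ i, α i) • Mmulti α (fourierCLE n f) := by
  have h := exch2_list (List.ofFn fun i => (i, α i)) f
  simp only [List.map_ofFn, Function.comp_def, List.sum_ofFn] at h
  exact h

end ExchangeAux

/-- For every multi-index `α ∈ ℕ₀ⁿ` and every `R : L(𝓢',𝓢) → 𝓢` the exchange formulas hold
strictly: `D^α(𝓕R) = 𝓕((−2πiM)^α R)` and `(2πiM)^α(𝓕R) = 𝓕(D^α R)`, where `D^α` and `M^α`
act componentwise and `(±2πiM)^α = (±2πi)^{|α|} M^α`. -/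
theorem fourier_exchange_formulas (n : ℕ) (hn : 0 < n) (α : Fin n → ℕ)
    (R : (SchDual n →L[ℂ] Sch n) → Sch n) :
    ((fun Φ : SchDual n →L[ℂ] Sch n => Dmulti α (FTbasic R Φ)) =
      FTbasic (fun Φ => (-(2 * (Real.pi : ℂ) * Complex.I)) ^ (∑ i, α i) • Mmulti α (R Φ))) ∧
    ((fun Φ : SchDual n →L[ℂ] Sch n =>
        (2 * (Real.pi : ℂ) * Complex.I) ^ (∑ i, α i) • Mmulti α (FTbasic R Φ)) =
      FTbasic (fun Φ => Dmulti α (R Φ))) := by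
  constructor
  · funext Φ
    show Dmulti α (fourierCLE n (R (ftConj Φ)))
      = fourierCLE n ((-(2 * (Real.pi : ℂ) * Complex.I)) ^ (∑ i, α i) •
          Mmulti α (R (ftConj Φ)))
    rw [_root_.map_smul]
    exact exchange1 α (R (ftConj Φ))
  · funext Φ
    exact (exchange2 α (R (ftConj Φ))).symm

end
end
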